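/- arXiv:2305.10774 — 2 statements merged into one kernel-verified Lean document; each statement's English description precedes it below -/
import Mathlib

section
/- Let f : ℂ → ℂ be continuous on the closed unit disc {z : |z| ≤ 1}, complex-differentiable (holomorphic) on the open unit disc {z : |z| < 1}, non-constant on the open unit disc, satisfy |f(z)| ≤ 1 for all |z| ≤ 1, and satisfy |f(z)| = 1 for all |z| = 1. Then f coincides on the closed unit disc with a finite Blaschke product: there exist n ≥ 1, ρ ∈ ℂ with |ρ| = 1, and ζ_1, …, ζ_n ∈ ℂ with |ζ_i| < 1, such that f(z) = ρ ∏_{i=1}^n (z − ζ_i)/(1 − conj(ζ_i) z) for every z with |z| ≤ 1. -/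
/-!
Dividing a zero `a` of `f` out by the Blaschke factor `(z - a) / (1 - conj a * z)`, which has
modulus one on the circle, leaves a function of the same kind. This can only be done finitely
often: fix `z₀` with `f z₀ ≠ 0`; since the zero set of `f` is a compact subset of the open disc,
the factors at zeros of `f` have modulus at most some `c < 1` at `z₀`, so `k` factors force
`‖f z₀‖ ≤ c ^ k`. Once no zero is left, the maximum principle applied to the quotient and to its
inverse makes it a unimodular constant.
-/

open Complex ComplexConjugate Metric Set

noncomputable def blaschkeFactor (a z : ℂ) : ℂ := (z - a) / (1 - conj a * z)

lemma one_sub_conj_mul_ne_zero {a z : ℂ} (ha : ‖a‖ < 1) (hz : ‖z‖ ≤ 1) :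
    1 - conj a * z ≠ 0 := by
  refine sub_ne_zero.2 fun h => ?_
  have : ‖conj a * z‖ < 1 := by
    rw [norm_mul, Complex.norm_conj]
    nlinarith [norm_nonneg a, norm_nonneg z]
  simp [← h] at this

lemma norm_one_sub_conj_mul_of_norm_eq_one (a : ℂ) {z : ℂ} (hz : ‖z‖ = 1) :
    ‖1 - conj a * z‖ = ‖z - a‖ := by
  have hzz : z * conj z = 1 := by
    rw [Complex.mul_conj, Complex.normSq_eq_norm_sq, hz]; norm_num
  have : 1 - conj a * z = z * (conj z - conj a) := by
    rw [mul_sub, hzz]; ring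
  rw [this, norm_mul, hz, one_mul, ← map_sub, Complex.norm_conj]

lemma norm_blaschkeFactor_lt_one {a z : ℂ} (ha : ‖a‖ < 1) (hz : ‖z‖ < 1) :
    ‖blaschkeFactor a z‖ < 1 := by
  have hne := one_sub_conj_mul_ne_zero ha hz.le
  rw [blaschkeFactor, norm_div, div_lt_one (norm_pos_iff.2 hne)]
  have key : ‖1 - conj a * z‖ ^ 2 - ‖z - a‖ ^ 2 = (1 - ‖a‖ ^ 2) * (1 - ‖z‖ ^ 2) := by
    simp only [← normSq_eq_norm_sq, normSq_apply, sub_re, one_re, mul_re, conj_re, conj_im, sub_im,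
      one_im, mul_im]
    ring
  have : 0 < (1 - ‖a‖ ^ 2) * (1 - ‖z‖ ^ 2) := by
    apply mul_pos <;> nlinarith [norm_nonneg a, norm_nonneg z]
  nlinarith [norm_nonneg (z - a), norm_nonneg (1 - conj a * z)]

structure IsContinuousInner (f : ℂ → ℂ) : Prop where
  continuousOn : ContinuousOn f (closedBall 0 1)
  differentiableOn : DifferentiableOn ℂ f (ball 0 1)
  norm_eq_one : ∀ z : ℂ, ‖z‖ = 1 → ‖f z‖ = 1

namespace IsContinuousInner

variable {f : ℂ → ℂ}

lemma diffContOnCl (hf : IsContinuousInner f) : DiffContOnCl ℂ f (ball 0 1) :=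
  ⟨hf.differentiableOn, by rw [closure_ball 0 one_ne_zero]; exact hf.continuousOn⟩

lemma norm_le_one (hf : IsContinuousInner f) {z : ℂ} (hz : z ∈ closedBall 0 1) : ‖f z‖ ≤ 1 := by
  refine norm_le_of_forall_mem_frontier_norm_le isBounded_ball hf.diffContOnCl (fun w hw => ?_)
    (by rwa [closure_ball 0 one_ne_zero])
  rw [frontier_ball 0 one_ne_zero, mem_sphere_zero_iff_norm] at hw
  exact (hf.norm_eq_one w hw).le

lemma mem_ball_of_eq_zero (hf : IsContinuousInner f) {z : ℂ} (hz : z ∈ closedBall 0 1)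
    (h0 : f z = 0) : z ∈ ball 0 1 := by
  refine mem_ball_zero_iff.2 ((mem_closedBall_zero_iff.1 hz).lt_of_ne fun h => ?_)
  simpa [h0] using hf.norm_eq_one z h

lemma inv (hf : IsContinuousInner f) (h0 : ∀ z ∈ ball 0 1, f z ≠ 0) :
    IsContinuousInner f⁻¹ where
  continuousOn := hf.continuousOn.inv₀ fun z hz h => h0 z (hf.mem_ball_of_eq_zero hz h) h
  differentiableOn := hf.differentiableOn.inv h0
  norm_eq_one z hz := by simp [hf.norm_eq_one z hz]

lemma exists_eq_const_of_forall_ne_zero (hf : IsContinuousInner f)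
    (h0 : ∀ z ∈ ball 0 1, f z ≠ 0) : ∃ ρ : ℂ, ‖ρ‖ = 1 ∧ ∀ z ∈ closedBall 0 1, f z = ρ := by
  have hnorm : ∀ z ∈ closedBall 0 1, ‖f z‖ = 1 := fun z hz => by
    have hfz : 0 < ‖f z‖ := norm_pos_iff.2 fun h => h0 z (hf.mem_ball_of_eq_zero hz h) h
    refine (hf.norm_le_one hz).antisymm ((inv_le_one₀ hfz).1 ?_)
    simpa using (hf.inv h0).norm_le_one hz
  have hmax : IsMaxOn (norm ∘ f) (ball 0 1) 0 := fun z hz => by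
    simp [hnorm z (ball_subset_closedBall hz), hnorm 0 (mem_closedBall_self zero_le_one)]
  have hconst := eqOn_closure_of_isPreconnected_of_isMaxOn_norm (convex_ball 0 1).isPreconnected
    isOpen_ball hf.diffContOnCl (mem_ball_self one_pos) hmax
  rw [closure_ball 0 one_ne_zero] at hconst
  exact ⟨f 0, hnorm 0 (mem_closedBall_self zero_le_one), hconst⟩

lemma exists_eq_blaschkeFactor_mul (hf : IsContinuousInner f) {a : ℂ} (ha : a ∈ ball 0 1)
    (hfa : f a = 0) : ∃ g : ℂ → ℂ, IsContinuousInner g ∧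
      ∀ z ∈ closedBall 0 1, f z = blaschkeFactor a z * g z := by
  have ha' : ‖a‖ < 1 := mem_ball_zero_iff.1 ha
  have hf_eq : ∀ z, f z = (z - a) * dslope f a z := fun z => by
    simpa [hfa] using (sub_smul_dslope f a z).symm
  refine ⟨fun z => (1 - conj a * z) * dslope f a z, ⟨?_, ?_, fun z hz => ?_⟩, fun z hz => ?_⟩
  · exact (continuousOn_const.sub (continuousOn_const.mul continuousOn_id)).mul
      ((continuousOn_dslope (closedBall_mem_nhds_of_mem ha)).2
        ⟨hf.continuousOn, hf.differentiableOn.differentiableAt (isOpen_ball.mem_nhds ha)⟩)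
  · exact ((differentiableOn_const _).sub ((differentiableOn_const _).mul differentiableOn_id)).mul
      ((differentiableOn_dslope (isOpen_ball.mem_nhds ha)).2 hf.differentiableOn)
  · rw [norm_mul, norm_one_sub_conj_mul_of_norm_eq_one a hz, ← norm_mul, ← hf_eq,
      hf.norm_eq_one z hz]
  · rw [hf_eq z, blaschkeFactor, div_mul_eq_mul_div, eq_div_iff
      (one_sub_conj_mul_ne_zero ha' (mem_closedBall_zero_iff.1 hz))]
    ring

lemma exists_ne_zero (hf : IsContinuousInner f) : ∃ z ∈ ball 0 1, f z ≠ 0 := by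
  by_contra! h
  have hzero : EqOn f 0 (closedBall 0 1) := by
    rw [← closure_ball 0 one_ne_zero]
    exact EqOn.of_subset_closure h hf.diffContOnCl.continuousOn continuousOn_const subset_closure
      subset_rfl
  simpa [hzero (mem_closedBall_zero_iff.2 (norm_one (α := ℂ)).le)] using hf.norm_eq_one 1 (by simp)

lemma exists_norm_blaschkeFactor_le (hf : IsContinuousInner f) {z₀ : ℂ} (hz₀ : z₀ ∈ ball 0 1) :
    ∃ c, 0 ≤ c ∧ c < 1 ∧ ∀ a ∈ closedBall 0 1, f a = 0 → ‖blaschkeFactor a z₀‖ ≤ c := by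
  set K := closedBall 0 1 ∩ f ⁻¹' {0}
  have hK : IsCompact K := (isCompact_closedBall 0 1).of_isClosed_subset
    (hf.continuousOn.preimage_isClosed_of_isClosed isClosed_closedBall isClosed_singleton)
    inter_subset_left
  rcases K.eq_empty_or_nonempty with hKe | hKne
  · exact ⟨0, le_rfl, one_pos, fun a ha h0 => (hKe.subset ⟨ha, h0⟩ : a ∈ (∅ : Set ℂ)).elim⟩
  have hcont : ContinuousOn (fun a => ‖blaschkeFactor a z₀‖) K := by
    refine (((continuous_const.sub continuous_id).continuousOn.div
      (continuous_const.sub (continuous_conj.mul continuous_const)).continuousOn) ?_).norm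
    exact fun a ha => one_sub_conj_mul_ne_zero
      (mem_ball_zero_iff.1 (hf.mem_ball_of_eq_zero ha.1 ha.2)) (mem_ball_zero_iff.1 hz₀).le
  obtain ⟨b, hb, hmax⟩ := hK.exists_isMaxOn hKne hcont
  exact ⟨_, norm_nonneg _, norm_blaschkeFactor_lt_one
    (mem_ball_zero_iff.1 (hf.mem_ball_of_eq_zero hb.1 hb.2)) (mem_ball_zero_iff.1 hz₀),
    fun a ha h0 => hmax ⟨ha, h0⟩⟩

lemma exists_eq_const_mul_prod_blaschkeFactor (hf : IsContinuousInner f) :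
    ∃ (n : ℕ) (ρ : ℂ) (ζ : Fin n → ℂ), ‖ρ‖ = 1 ∧ (∀ i, ‖ζ i‖ < 1) ∧
      ∀ z ∈ closedBall 0 1, f z = ρ * ∏ i, blaschkeFactor (ζ i) z := by
  by_contra hnot
  have peel : ∀ k, ∃ ζ : Fin k → ℂ, (∀ i, ‖ζ i‖ < 1) ∧ ∃ g, IsContinuousInner g ∧
      ∀ z ∈ closedBall 0 1, f z = (∏ i, blaschkeFactor (ζ i) z) * g z := by
    intro k
    induction k with
    | zero => exact ⟨Fin.elim0, fun i => i.elim0, f, hf, by simp⟩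
    | succ k ih =>
      obtain ⟨ζ, hζ, g, hg, hfg⟩ := ih
      obtain ⟨a, ha, hga⟩ : ∃ a ∈ ball 0 1, g a = 0 := by
        by_contra! h
        obtain ⟨ρ, hρ, hgρ⟩ := hg.exists_eq_const_of_forall_ne_zero h
        exact hnot ⟨k, ρ, ζ, hρ, hζ, fun z hz => by rw [hfg z hz, hgρ z hz, mul_comm]⟩
      obtain ⟨h, hh, hgh⟩ := hg.exists_eq_blaschkeFactor_mul ha hga
      refine ⟨Fin.cons a ζ, Fin.cases (mem_ball_zero_iff.1 ha) hζ, h, hh, fun z hz => ?_⟩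
      rw [hfg z hz, hgh z hz, Fin.prod_univ_succ]
      simp only [Fin.cons_zero, Fin.cons_succ]
      ring
  obtain ⟨z₀, hz₀, hfz₀⟩ := hf.exists_ne_zero
  obtain ⟨c, hc₀, hc, hc_bound⟩ := hf.exists_norm_blaschkeFactor_le hz₀
  obtain ⟨k, hk⟩ := exists_pow_lt_of_lt_one (norm_pos_iff.2 hfz₀) hc
  obtain ⟨ζ, hζ, g, hg, hfg⟩ := peel k
  have hζ_zero : ∀ i, f (ζ i) = 0 := fun i => by
    rw [hfg _ (mem_closedBall_zero_iff.2 (hζ i).le),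
      Finset.prod_eq_zero (Finset.mem_univ i) (by simp [blaschkeFactor]), zero_mul]
  refine hk.not_ge ?_
  calc ‖f z₀‖ = (∏ i, ‖blaschkeFactor (ζ i) z₀‖) * ‖g z₀‖ := by
        rw [hfg z₀ (ball_subset_closedBall hz₀), norm_mul, norm_prod]
    _ ≤ (∏ _i : Fin k, c) * 1 := by
        gcongr with i _
        · exact hc_bound _ (mem_closedBall_zero_iff.2 (hζ i).le) (hζ_zero i)
        · exact hg.norm_le_one (ball_subset_closedBall hz₀)
    _ = c ^ k := by simp

end IsContinuousInner

theorem eq_blaschke_of_maps_disc_to_disc_and_circle_to_circle_general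
    (f : ℂ → ℂ)
    (hcont : ContinuousOn f (closedBall (0 : ℂ) 1))
    (hdiff : DifferentiableOn ℂ f (ball (0 : ℂ) 1))
    (hnonconst : ∃ z ∈ ball (0 : ℂ) 1, ∃ w ∈ ball (0 : ℂ) 1, f z ≠ f w)
    (hcirc : ∀ z : ℂ, ‖z‖ = 1 → ‖f z‖ = 1) :
    ∃ (n : ℕ) (ρ : ℂ) (ζ : Fin n → ℂ), 1 ≤ n ∧ ‖ρ‖ = 1 ∧
      (∀ i, ‖ζ i‖ < 1) ∧
      ∀ z ∈ closedBall (0 : ℂ) 1,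
        f z = ρ * ∏ i, (z - ζ i) / (1 - (starRingEnd ℂ) (ζ i) * z) := by
  obtain ⟨n, ρ, ζ, hρ, hζ, hf⟩ :=
    IsContinuousInner.exists_eq_const_mul_prod_blaschkeFactor ⟨hcont, hdiff, hcirc⟩
  refine ⟨n, ρ, ζ, Nat.one_le_iff_ne_zero.2 fun hn => ?_, hρ, hζ, hf⟩
  obtain ⟨z, hz, w, hw, hne⟩ := hnonconst
  subst hn
  simp [hf z (ball_subset_closedBall hz), hf w (ball_subset_closedBall hw)] at hne

/-- A non-constant map of the closed unit disc to itself which is analytic in the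
interior and maps the boundary circle to itself coincides on the closed unit disc
with a finite Blaschke product. -/
theorem eq_blaschke_of_maps_disc_to_disc_and_circle_to_circle
    (f : ℂ → ℂ)
    (hcont : ContinuousOn f (closedBall (0 : ℂ) 1))
    (hdiff : DifferentiableOn ℂ f (ball (0 : ℂ) 1))
    (hnonconst : ∃ z ∈ ball (0 : ℂ) 1, ∃ w ∈ ball (0 : ℂ) 1, f z ≠ f w)
    (hbound : ∀ z ∈ closedBall (0 : ℂ) 1, ‖f z‖ ≤ 1)
    (hcirc : ∀ z : ℂ, ‖z‖ = 1 → ‖f z‖ = 1) :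
    ∃ (n : ℕ) (ρ : ℂ) (ζ : Fin n → ℂ), 1 ≤ n ∧ ‖ρ‖ = 1 ∧
      (∀ i, ‖ζ i‖ < 1) ∧
      ∀ z ∈ closedBall (0 : ℂ) 1,
        f z = ρ * ∏ i, (z - ζ i) / (1 - (starRingEnd ℂ) (ζ i) * z) :=
  eq_blaschke_of_maps_disc_to_disc_and_circle_to_circle_general f hcont hdiff hnonconst hcirc
end

section
/- Fix 0 < δ < 1 and let Ω = {ω ∈ ℂ : |ω| < δ} (the ball B_δ(0) ⊂ ℝ² ≅ ℂ). Let Φ(z) = z/√(1 − |z|²). Let d ≥ 1 and let φ_1, …, φ_d : Ω → ℂ be continuously differentiable functions with |φ_i(ω)| < 1 for all ω and i. Then there exists ε > 0 such that for every λ = (λ_1, …, λ_d) ∈ ℂ^d with |λ_i| < ε for all i, there exists ω ∈ Ω with |λ_i φ_i(ω)| < 1 for all i and Φ(ω) + Σ_{i=1}^d Φ(λ_i φ_i(ω)) = 0. In particular, the set {λ ∈ ℂ^d : ∃ ω ∈ Ω, Φ(ω) + Σ_i Φ(λ_i φ_i(ω)) = 0} contains an open neighbourhood of 0 and hence has positive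 2d-dimensional Lebesgue measure. (Taking the base coefficient function ζ_2(ω) = ω, this shows that no finite-dimensional subspace of C¹-parametrised monic quadratic Blaschke product cocycles is a probe for the set of stable cocycles when Ω = B_δ(0) ⊂ ℝ².) -/
/-! Writing `S(ω) = Σ Φ(λᵢ φᵢ(ω))` and `Ψ = Φ⁻¹`, the equation `Φ(ω) + S(ω) = 0` is the
fixed-point equation `ω = Ψ(-S(ω))`. The `φᵢ` are `C¹`, hence Lipschitz on the closed ball of
radius `δ/2`; for small `λ` the map `S` is therefore small and has a small Lipschitz constant
there, so, as `|Ψ(w)| ≤ |w|`, `ω ↦ Ψ(-S(ω))` is a contraction of that ball into itself and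
Banach's fixed point theorem produces the zero. -/

open Complex Metric

open scoped NNReal

/-- The paper's `Φ`; `planeToDisk` is its inverse `Ψ`. -/
noncomputable def diskToPlane (z : ℂ) : ℂ := z / (Real.sqrt (1 - ‖z‖ ^ 2) : ℂ)

noncomputable def planeToDisk (w : ℂ) : ℂ := w / (Real.sqrt (1 + ‖w‖ ^ 2) : ℂ)

lemma norm_div_sqrt (z : ℂ) (x : ℝ) : ‖z / (Real.sqrt x : ℂ)‖ = ‖z‖ / Real.sqrt x := by
  rw [norm_div, Complex.norm_real, Real.norm_of_nonneg (Real.sqrt_nonneg x)]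

lemma one_le_sqrt_one_add_sq (a : ℝ) : 1 ≤ Real.sqrt (1 + a ^ 2) :=
  Real.one_le_sqrt.2 (by nlinarith)

lemma norm_planeToDisk_le (w : ℂ) : ‖planeToDisk w‖ ≤ ‖w‖ := by
  rw [planeToDisk, norm_div_sqrt]
  exact div_le_self (norm_nonneg w) (one_le_sqrt_one_add_sq _)

lemma norm_diskToPlane_le_two_mul {z : ℂ} (hz : ‖z‖ ≤ 1 / 2) :
    ‖diskToPlane z‖ ≤ 2 * ‖z‖ := by
  have hsqrt : 1 / 2 ≤ Real.sqrt (1 - ‖z‖ ^ 2) :=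
    Real.le_sqrt_of_sq_le (by nlinarith [norm_nonneg z])
  rw [diskToPlane, norm_div_sqrt, div_le_iff₀ (by linarith)]
  nlinarith [norm_nonneg z]

lemma diskToPlane_planeToDisk (w : ℂ) : diskToPlane (planeToDisk w) = w := by
  unfold planeToDisk
  set s := Real.sqrt (1 + ‖w‖ ^ 2)
  have hs : 0 < s := one_pos.trans_le (one_le_sqrt_one_add_sq _)
  have hs2 : s ^ 2 = 1 + ‖w‖ ^ 2 := Real.sq_sqrt (by positivity)
  have hsqrt : Real.sqrt (1 - ‖w / (s : ℂ)‖ ^ 2) = s⁻¹ := by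
    rw [norm_div, Complex.norm_real, Real.norm_of_nonneg hs.le,
      ← Real.sqrt_sq (inv_nonneg.2 hs.le)]
    congr 1
    field_simp
    linarith
  have hs' : (s : ℂ) ≠ 0 := by exact_mod_cast hs.ne'
  rw [diskToPlane, hsqrt]
  push_cast
  field_simp

lemma ContDiffAt.id_div_sqrt {g : ℂ → ℝ} {z : ℂ} {n : WithTop ℕ∞} (hg : ContDiffAt ℝ n g z)
    (hz : 0 < g z) : ContDiffAt ℝ n (fun w : ℂ => w / (Real.sqrt (g w) : ℂ)) z := by
  have hsqrt := ((Real.contDiffAt_sqrt hz.ne').comp z hg).inv (Real.sqrt_pos.2 hz).ne'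
  refine (hsqrt.smul contDiffAt_id).congr_of_eventuallyEq (.of_forall fun w => ?_)
  simp [Complex.real_smul, div_eq_inv_mul]

lemma contDiffOn_diskToPlane {n : WithTop ℕ∞} : ContDiffOn ℝ n diskToPlane (ball 0 1) := by
  intro z hz
  have hpos : 0 < 1 - ‖z‖ ^ 2 := by
    have := mem_ball_zero_iff.1 hz
    nlinarith [norm_nonneg z]
  exact (ContDiffAt.id_div_sqrt (contDiffAt_const.sub (contDiff_norm_sq ℝ).contDiffAt)
    hpos).contDiffWithinAt

lemma contDiff_planeToDisk {n : WithTop ℕ∞} : ContDiff ℝ n planeToDisk :=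
  contDiff_iff_contDiffAt.2 fun _ =>
    ContDiffAt.id_div_sqrt (contDiffAt_const.add (contDiff_norm_sq ℝ).contDiffAt) (by positivity)

lemma LipschitzOnWith.finset_sum {α ι E : Type*} [PseudoEMetricSpace α]
    [SeminormedAddCommGroup E] {s : Set α} (t : Finset ι) {f : ι → α → E} {K : ι → ℝ≥0}
    (hf : ∀ i ∈ t, LipschitzOnWith (K i) (f i) s) :
    LipschitzOnWith (∑ i ∈ t, K i) (fun x => ∑ i ∈ t, f i x) s := by
  classical
  induction t using Finset.induction_on with
  | empty => simpa using (LipschitzWith.const (α := α) (0 : E)).lipschitzOnWith (s := s)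
  | insert i t hi ih =>
    simp only [Finset.sum_insert hi]
    exact (hf i (t.mem_insert_self i)).add (ih fun j hj => hf j (Finset.mem_insert_of_mem hj))

lemma exists_pos_diskToPlane_add_eq_zero {r : ℝ} (hr : 0 ≤ r) :
    ∃ η > 0, ∀ (S : ℂ → ℂ) (K : ℝ≥0), (K : ℝ) < η →
      Set.MapsTo S (closedBall 0 r) (closedBall 0 r) → LipschitzOnWith K S (closedBall 0 r) →
      ∃ ω ∈ closedBall 0 r, diskToPlane ω + S ω = 0 := by
  obtain ⟨L, hL⟩ := contDiff_planeToDisk.contDiffOn.exists_lipschitzOnWith one_ne_zero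
    (convex_closedBall (0 : ℂ) r) (isCompact_closedBall 0 r)
  refine ⟨1 / (L + 1), by positivity, fun S K hK hmaps hS => ?_⟩
  have hnegmaps : Set.MapsTo (-S) (closedBall 0 r) (closedBall 0 r) := fun ω hω => by
    simpa using hmaps hω
  have hGmaps : Set.MapsTo (planeToDisk ∘ (-S)) (closedBall 0 r) (closedBall 0 r) :=
    fun ω hω => mem_closedBall_zero_iff.2
      ((norm_planeToDisk_le _).trans (mem_closedBall_zero_iff.1 (hnegmaps hω)))
  have hcontr : ContractingWith (L * K) (hGmaps.restrict _ _ _) := by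
    refine ⟨?_, (hL.comp hS.neg hnegmaps).mapsToRestrict hGmaps⟩
    rw [← NNReal.coe_lt_coe]
    push_cast
    rw [lt_div_iff₀ (by positivity)] at hK
    nlinarith [L.coe_nonneg, K.coe_nonneg]
  obtain ⟨ω, hω, hfix, -⟩ := hcontr.exists_fixedPoint' isClosed_closedBall.isComplete hGmaps
    (mem_closedBall_self hr) (edist_ne_top _ _)
  refine ⟨ω, hω, ?_⟩
  nth_rw 1 [← hfix.eq]
  rw [Function.comp_apply, diskToPlane_planeToDisk, Pi.neg_apply, neg_add_cancel]

noncomputable def perturbationSum {ι : Type*} [Fintype ι] (φ : ι → ℂ → ℂ) (l : ι → ℂ)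
    (ω : ℂ) : ℂ :=
  ∑ i, diskToPlane (l i * φ i ω)

section perturbationSum

variable {ι : Type*} [Fintype ι] {φ : ι → ℂ → ℂ}

lemma norm_perturbationSum_le {l : ι → ℂ} {ω : ℂ} (h : ∀ i, ‖l i * φ i ω‖ ≤ 1 / 2) :
    ‖perturbationSum φ l ω‖ ≤ 2 * ∑ i, ‖l i * φ i ω‖ := by
  rw [Finset.mul_sum]
  exact (norm_sum_le _ _).trans (Finset.sum_le_sum fun i _ => norm_diskToPlane_le_two_mul (h i))

lemma lipschitzOnWith_perturbationSum {l : ι → ℂ} {s t : Set ℂ} {LΦ : ℝ≥0}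
    (hΦ : LipschitzOnWith LΦ diskToPlane t) {Lφ : ι → ℝ≥0}
    (hφ : ∀ i, LipschitzOnWith (Lφ i) (φ i) s)
    (hmaps : ∀ i, Set.MapsTo (fun ω => l i * φ i ω) s t) :
    LipschitzOnWith (∑ i, LΦ * (‖l i‖₊ * Lφ i)) (perturbationSum φ l) s :=
  LipschitzOnWith.finset_sum _ fun i _ =>
    hΦ.comp ((lipschitzWith_smul (l i)).comp_lipschitzOnWith (hφ i)) (hmaps i)

lemma exists_pos_perturbationSum_small {s : Set ℂ} {Lφ : ι → ℝ≥0}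
    (hφ : ∀ i, LipschitzOnWith (Lφ i) (φ i) s) (hφ1 : ∀ i, ∀ ω ∈ s, ‖φ i ω‖ ≤ 1)
    {ρ η : ℝ} (hρ : 0 < ρ) (hη : 0 < η) :
    ∃ ε > 0, ∀ l : ι → ℂ, (∀ i, ‖l i‖ < ε) →
      (∀ i, ∀ ω ∈ s, ‖l i * φ i ω‖ ≤ 1 / 2) ∧ (∀ ω ∈ s, ‖perturbationSum φ l ω‖ ≤ ρ) ∧
      ∃ K : ℝ≥0, (K : ℝ) < η ∧ LipschitzOnWith K (perturbationSum φ l) s := by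
  obtain ⟨LΦ, hLΦ⟩ := (contDiffOn_diskToPlane.mono (closedBall_subset_ball one_half_lt_one)
    ).exists_lipschitzOnWith one_ne_zero (convex_closedBall (0 : ℂ) (1 / 2))
    (isCompact_closedBall 0 (1 / 2))
  set A : ℝ := LΦ * ∑ i, (Lφ i : ℝ)
  set N : ℝ := (Fintype.card ι : ℝ)
  set ε := min (1 / 2) (min (ρ / (2 * (N + 1))) (η / (A + 1)))
  have hε : 0 < ε := lt_min one_half_pos (lt_min (by positivity) (by positivity))
  refine ⟨ε, hε, fun l hl => ?_⟩
  have hterm : ∀ i, ∀ ω ∈ s, ‖l i * φ i ω‖ ≤ ε := fun i ω hω => by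
    rw [norm_mul]
    simpa using mul_le_mul (hl i).le (hφ1 i ω hω) (norm_nonneg _) hε.le
  have hsmall : ∀ i, ∀ ω ∈ s, ‖l i * φ i ω‖ ≤ 1 / 2 :=
    fun i ω hω => (hterm i ω hω).trans (min_le_left _ _)
  refine ⟨hsmall, fun ω hω => ?_, _, ?_, lipschitzOnWith_perturbationSum hLΦ hφ
    fun i ω hω => mem_closedBall_zero_iff.2 (hsmall i ω hω)⟩
  · have hερ : ε ≤ ρ / (2 * (N + 1)) := (min_le_right _ _).trans (min_le_left _ _)
    calc ‖perturbationSum φ l ω‖ ≤ 2 * ∑ i, ‖l i * φ i ω‖ :=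
          norm_perturbationSum_le fun i => hsmall i ω hω
      _ ≤ 2 * (N * ε) := by
          gcongr
          simpa [N] using Finset.sum_le_sum fun i (_ : i ∈ Finset.univ) => hterm i ω hω
      _ ≤ ρ := by
          rw [le_div_iff₀ (by positivity)] at hερ
          nlinarith
  · have hεη : ε ≤ η / (A + 1) := (min_le_right _ _).trans (min_le_right _ _)
    rw [le_div_iff₀ (by positivity)] at hεη
    push_cast
    calc ∑ i, (LΦ : ℝ) * (‖l i‖ * Lφ i) ≤ ∑ i, (LΦ : ℝ) * (ε * Lφ i) := by
          gcongr with i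
          exact (hl i).le
      _ = ε * A := by simp only [A, Finset.mul_sum]; ring_nf
      _ < η := by nlinarith

end perturbationSum

theorem no_probe_two_dimensional_base_general
    (δ : ℝ) (hδ0 : 0 < δ)
    (Φ : ℂ → ℂ) (hΦ : ∀ z, Φ z = z / (Real.sqrt (1 - ‖z‖ ^ 2) : ℂ))
    (d : ℕ)
    (φ : Fin d → ℂ → ℂ)
    (hφC1 : ∀ i, ContDiffOn ℝ 1 (φ i) (ball (0 : ℂ) δ))
    (hφdisc : ∀ i, ∀ ω ∈ ball (0 : ℂ) δ, ‖φ i ω‖ < 1) :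
    ∃ ε > 0, ∀ l : Fin d → ℂ, (∀ i, ‖l i‖ < ε) →
      ∃ ω ∈ ball (0 : ℂ) δ,
        (∀ i, ‖l i * φ i ω‖ < 1) ∧
        Φ ω + ∑ i, Φ (l i * φ i ω) = 0 := by
  obtain rfl : Φ = diskToPlane := funext hΦ
  have hsub : closedBall (0 : ℂ) (δ / 2) ⊆ ball 0 δ := closedBall_subset_ball (by linarith)
  obtain ⟨η, hη, hzero⟩ := exists_pos_diskToPlane_add_eq_zero (by positivity : 0 ≤ δ / 2)
  choose Lφ hLφ using fun i => ((hφC1 i).mono hsub).exists_lipschitzOnWith one_ne_zero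
    (convex_closedBall _ _) (isCompact_closedBall _ _)
  obtain ⟨ε, hε, hsmall⟩ := exists_pos_perturbationSum_small hLφ
    (fun i ω hω => (hφdisc i ω (hsub hω)).le) (by positivity : 0 < δ / 2) hη
  refine ⟨ε, hε, fun l hl => ?_⟩
  obtain ⟨hterm, hbound, K, hK, hLip⟩ := hsmall l hl
  obtain ⟨ω, hω, hω0⟩ := hzero (perturbationSum φ l) K hK
    (fun ω hω => mem_closedBall_zero_iff.2 (hbound ω hω)) hLip
  exact ⟨ω, hsub hω, fun i => (hterm i ω hω).trans_lt one_half_lt_one, hω0⟩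

/-- Over a two-dimensional base `Ω = B_δ(0) ⊂ ℝ² ≅ ℂ`, for any finite family of `C¹`
disc-valued functions `φ_1, …, φ_d`, all sufficiently small linear-combination
perturbations produce a vanishing coefficient: there is `ε > 0` such that for every
`l ∈ ℂ^d` with all `|l i| < ε` there is `ω ∈ Ω` with `Φ(ω) + Σ_i Φ(l i · φ_i(ω)) = 0`.
Hence no finite-dimensional subspace is a probe for stability when `dim Ω = 2`. -/
theorem no_probe_two_dimensional_base
    (δ : ℝ) (hδ0 : 0 < δ) (hδ1 : δ < 1)
    (Φ : ℂ → ℂ) (hΦ : ∀ z, Φ z = z / (Real.sqrt (1 - ‖z‖ ^ 2) : ℂ))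
    (d : ℕ) (hd : 1 ≤ d)
    (φ : Fin d → ℂ → ℂ)
    (hφC1 : ∀ i, ContDiffOn ℝ 1 (φ i) (ball (0 : ℂ) δ))
    (hφdisc : ∀ i, ∀ ω ∈ ball (0 : ℂ) δ, ‖φ i ω‖ < 1) :
    ∃ ε > 0, ∀ l : Fin d → ℂ, (∀ i, ‖l i‖ < ε) →
      ∃ ω ∈ ball (0 : ℂ) δ,
        (∀ i, ‖l i * φ i ω‖ < 1) ∧
        Φ ω + ∑ i, Φ (l i * φ i ω) = 0 :=
  no_probe_two_dimensional_base_general δ hδ0 Φ hΦ d φ hφC1 hφdisc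
end
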